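/- For all real constants a ≥ 0 and b ≥ 0, the function q(x) = x · log(1 + a + b/x) is concave on the interval (0, ∞). -/

import Mathlib

/-!
Since `1 + a + b / x = ((1 + a) * x + b) / x`, the function is the perspective
`(x, y) ↦ x log (y / x)` of `log` restricted to the line `y = (1 + a) * x + b`.
Perspectives of concave functions are concave: at a convex combination `x = μ x₁ + ν x₂`,
`y = μ y₁ + ν y₂`, the ratio `y / x` is the convex combination of `y₁ / x₁` and `y₂ / x₂`
with weights `μ x₁ / x` and `ν x₂ / x`.
-/

section Perspective

variable {𝕜 E : Type*} [Field 𝕜] [LinearOrder 𝕜] [IsStrictOrderedRing 𝕜] [AddCommGroup E]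
  [Module 𝕜 E]

omit [LinearOrder 𝕜] [IsStrictOrderedRing 𝕜] in
theorem inv_smul_add_smul_eq {x₁ x₂ μ ν : 𝕜} (hx₁ : x₁ ≠ 0) (hx₂ : x₂ ≠ 0) (y₁ y₂ : E) :
    (μ * x₁ + ν * x₂)⁻¹ • (μ • y₁ + ν • y₂) =
      (μ * x₁ / (μ * x₁ + ν * x₂)) • (x₁⁻¹ • y₁) + (ν * x₂ / (μ * x₁ + ν * x₂)) • (x₂⁻¹ • y₂) := by
  simp only [smul_smul, smul_add]
  congr 2 <;> field_simp

theorem ConcaveOn.perspective {s : Set E} {f : E → 𝕜} (hf : ConcaveOn 𝕜 s f) :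
    ConcaveOn 𝕜 {p : 𝕜 × E | 0 < p.1 ∧ p.1⁻¹ • p.2 ∈ s} fun p ↦ p.1 * f (p.1⁻¹ • p.2) := by
  have weights : ∀ ⦃x₁ x₂ μ ν : 𝕜⦄, 0 < x₁ → 0 < x₂ → 0 ≤ μ → 0 ≤ ν → μ + ν = 1 →
      0 < μ * x₁ + ν * x₂ ∧ 0 ≤ μ * x₁ / (μ * x₁ + ν * x₂) ∧ 0 ≤ ν * x₂ / (μ * x₁ + ν * x₂) ∧
        μ * x₁ / (μ * x₁ + ν * x₂) + ν * x₂ / (μ * x₁ + ν * x₂) = 1 := by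
    intro x₁ x₂ μ ν hx₁ hx₂ hμ hν hμν
    have hx : 0 < μ * x₁ + ν * x₂ := convex_Ioi 0 hx₁ hx₂ hμ hν hμν
    exact ⟨hx, by positivity, by positivity, by rw [← add_div, div_self hx.ne']⟩
  refine ⟨?_, ?_⟩
  · rintro ⟨x₁, y₁⟩ ⟨hx₁, hy₁⟩ ⟨x₂, y₂⟩ ⟨hx₂, hy₂⟩ μ ν hμ hν hμν
    obtain ⟨hx, hw₁, hw₂, hw⟩ := weights hx₁ hx₂ hμ hν hμν
    simp only [Set.mem_ofPred_eq, Prod.fst_add, Prod.snd_add, Prod.smul_fst, Prod.smul_snd,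
      smul_eq_mul]
    rw [inv_smul_add_smul_eq hx₁.ne' hx₂.ne']
    exact ⟨hx, hf.1 hy₁ hy₂ hw₁ hw₂ hw⟩
  · rintro ⟨x₁, y₁⟩ ⟨hx₁, hy₁⟩ ⟨x₂, y₂⟩ ⟨hx₂, hy₂⟩ μ ν hμ hν hμν
    obtain ⟨hx, hw₁, hw₂, hw⟩ := weights hx₁ hx₂ hμ hν hμν
    simp only [Prod.fst_add, Prod.snd_add, Prod.smul_fst, Prod.smul_snd, smul_eq_mul]
    rw [inv_smul_add_smul_eq hx₁.ne' hx₂.ne']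
    calc μ * (x₁ * f (x₁⁻¹ • y₁)) + ν * (x₂ * f (x₂⁻¹ • y₂))
        = (μ * x₁ + ν * x₂) * (μ * x₁ / (μ * x₁ + ν * x₂) * f (x₁⁻¹ • y₁) +
            ν * x₂ / (μ * x₁ + ν * x₂) * f (x₂⁻¹ • y₂)) := by field_simp
      _ ≤ _ := mul_le_mul_of_nonneg_left (hf.2 hy₁ hy₂ hw₁ hw₂ hw) hx.le

end Perspective

open Real

/-- For all real constants `a ≥ 0` and `b ≥ 0`, the function
`q(x) = x * log (1 + a + b / x)` is concave on the interval `(0, ∞)`. -/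
theorem concave_x_mul_log_one_add_div (a b : ℝ) (ha : 0 ≤ a) (hb : 0 ≤ b) :
    ConcaveOn ℝ (Set.Ioi (0 : ℝ)) (fun x : ℝ => x * Real.log (1 + a + b / x)) := by
  have h := strictConcaveOn_log_Ioi.concaveOn.perspective.comp_affineMap
    ((AffineMap.id ℝ ℝ).prod ((1 + a) • AffineMap.id ℝ ℝ + AffineMap.const ℝ ℝ b))
  refine (h.subset ?_ (convex_Ioi 0)).congr fun x (hx : 0 < x) ↦ ?_
  · exact fun x (hx : 0 < x) ↦ ⟨hx, show 0 < x⁻¹ * ((1 + a) * x + b) by positivity⟩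
  · show x * log (x⁻¹ * ((1 + a) * x + b)) = x * log (1 + a + b / x)
    field_simp
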